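/- arXiv:2001.07521 — 7 statements merged into one kernel-verified Lean document; each statement's English description precedes it below -/
import Mathlib

section
/- In a Euclidean Hurwitz algebra, if u is a unit vector orthogonal to the unit element 1, then u · u = -1. -/
/-! Polarizing `‖x y‖ = ‖x‖ ‖y‖` first in the left and then in the right factor gives the exchange
identity `⟪a b, c d⟫ + ⟪a d, c b⟫ = 2 ⟪a, c⟫ ⟪b, d⟫`. Taking `a = b = u` and `c = d = 1` with
`u ⊥ 1` yields `⟪u u, 1⟫ = -‖u‖² = -1`; since `u u` and `1` are unit vectors, the equality case of
Cauchy–Schwarz forces `u u = -1`. -/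

section NormMultiplicative

variable {A : Type*} [NormedAddCommGroup A] [InnerProductSpace ℝ A]

theorem inner_mul_right_mul_right (mul : A →ₗ[ℝ] A →ₗ[ℝ] A)
    (hmon : ∀ x y, ‖mul x y‖ = ‖x‖ * ‖y‖) (a c b : A) :
    inner ℝ (mul a b) (mul c b) = inner ℝ a c * ‖b‖ ^ 2 := by
  have h : ‖mul a b + mul c b‖ ^ 2 = (‖a + c‖ * ‖b‖) ^ 2 := by
    rw [← LinearMap.add_apply, ← map_add, hmon]
  rw [norm_add_sq_real, mul_pow, norm_add_sq_real a c, hmon a b, hmon c b] at h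
  linear_combination h / 2

theorem inner_mul_add_inner_mul_exchange (mul : A →ₗ[ℝ] A →ₗ[ℝ] A)
    (hmon : ∀ x y, ‖mul x y‖ = ‖x‖ * ‖y‖) (a c b d : A) :
    inner ℝ (mul a b) (mul c d) + inner ℝ (mul a d) (mul c b) =
      2 * inner ℝ a c * inner ℝ b d := by
  have h := inner_mul_right_mul_right mul hmon a c (b + d)
  simp only [map_add, inner_add_left, inner_add_right, norm_add_sq_real] at h
  rw [inner_mul_right_mul_right mul hmon a c b, inner_mul_right_mul_right mul hmon a c d] at h
  linear_combination h

theorem inner_mul_self_unit_of_orthogonal (mul : A →ₗ[ℝ] A →ₗ[ℝ] A)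
    (hmon : ∀ x y, ‖mul x y‖ = ‖x‖ * ‖y‖) {e : A}
    (hul : ∀ x, mul e x = x) (hur : ∀ x, mul x e = x) {u : A} (hue : inner ℝ u e = 0) :
    inner ℝ (mul u u) e = -‖u‖ ^ 2 := by
  have h := inner_mul_add_inner_mul_exchange mul hmon u e u e
  simp only [hul, hur] at h
  rw [hue, real_inner_self_eq_norm_sq] at h
  linear_combination h

end NormMultiplicative

theorem stmt_2 {A : Type*} [NormedAddCommGroup A] [InnerProductSpace ℝ A]
    (mul : A →ₗ[ℝ] A →ₗ[ℝ] A) (e : A) (he : ‖e‖ = 1)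
    (hul : ∀ x, mul e x = x) (hur : ∀ x, mul x e = x)
    (hmon : ∀ x y, ‖mul x y‖ = ‖x‖ * ‖y‖)
    (u : A) (hu : ‖u‖ = 1) (hue : (inner ℝ u e : ℝ) = 0) :
    mul u u = -e := by
  have hinner : inner ℝ (mul u u) e = -1 := by
    rw [inner_mul_self_unit_of_orthogonal mul hmon hul hur hue, hu, one_pow]
  have hnorm : ‖mul u u‖ = 1 := by rw [hmon, hu, one_mul]
  exact (inner_eq_neg_one_iff_of_norm_eq_one hnorm he).mp hinner
end

section
/- In a Euclidean Hurwitz algebra, if u and v are orthonormal vectors each orthogonal to the unit element 1, then the product u · v is a unit vector orthogonal to each of 1, u, and v. -/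
/-! Polarizing `‖x y‖ = ‖x‖ ‖y‖` in one factor gives `⟪x y, x z⟫ = ‖x‖² ⟪y, z⟫` and its mirror
image; polarizing once more gives the exchange identity
`⟪x y, z w⟫ + ⟪z y, x w⟫ = 2 ⟪x, z⟫ ⟪y, w⟫`. With `1` inserted as a factor these identities give
`⟪u v, u⟫ = ⟪u v, u 1⟫ = ⟪v, 1⟫ = 0`, `⟪u v, v⟫ = ⟪u v, 1 v⟫ = ⟪u, 1⟫ = 0` and
`⟪u v, 1⟫ = -⟪1 v, u 1⟫ = -⟪v, u⟫ = 0`. -/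

open RealInnerProductSpace

section NormMultiplicative

variable {E F G : Type*}
  [NormedAddCommGroup E] [InnerProductSpace ℝ E]
  [NormedAddCommGroup F] [InnerProductSpace ℝ F]
  [NormedAddCommGroup G] [InnerProductSpace ℝ G]
  (mul : E →ₗ[ℝ] F →ₗ[ℝ] G)

theorem inner_mul_mul_same_left (hmon : ∀ x y, ‖mul x y‖ = ‖x‖ * ‖y‖) (x : E) (y z : F) :
    ⟪mul x y, mul x z⟫ = ‖x‖ ^ 2 * ⟪y, z⟫ := by
  rw [real_inner_eq_norm_add_mul_self_sub_norm_mul_self_sub_norm_mul_self_div_two,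
    real_inner_eq_norm_add_mul_self_sub_norm_mul_self_sub_norm_mul_self_div_two,
    ← map_add, hmon, hmon, hmon]
  ring

theorem inner_mul_mul_same_right (hmon : ∀ x y, ‖mul x y‖ = ‖x‖ * ‖y‖) (x y : E) (z : F) :
    ⟪mul x z, mul y z⟫ = ‖z‖ ^ 2 * ⟪x, y⟫ := by
  rw [real_inner_eq_norm_add_mul_self_sub_norm_mul_self_sub_norm_mul_self_div_two,
    real_inner_eq_norm_add_mul_self_sub_norm_mul_self_sub_norm_mul_self_div_two,
    ← LinearMap.add_apply, ← map_add, hmon, hmon, hmon]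
  ring

theorem inner_mul_mul_add_inner_mul_mul_swap (hmon : ∀ x y, ‖mul x y‖ = ‖x‖ * ‖y‖)
    (x z : E) (y w : F) :
    ⟪mul x y, mul z w⟫ + ⟪mul z y, mul x w⟫ = 2 * ⟪x, z⟫ * ⟪y, w⟫ := by
  have hsum := inner_mul_mul_same_left mul hmon (x + z) y w
  rw [map_add, LinearMap.add_apply, LinearMap.add_apply, norm_add_sq_real] at hsum
  simp only [inner_add_left, inner_add_right, inner_mul_mul_same_left mul hmon] at hsum
  linarith

end NormMultiplicative

theorem stmt_4_general {A : Type*} [NormedAddCommGroup A] [InnerProductSpace ℝ A]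
    (mul : A →ₗ[ℝ] A →ₗ[ℝ] A) (e : A)
    (hul : ∀ x, mul e x = x) (hur : ∀ x, mul x e = x)
    (hmon : ∀ x y, ‖mul x y‖ = ‖x‖ * ‖y‖)
    (u v : A) (hu : ‖u‖ = 1) (hv : ‖v‖ = 1)
    (hue : (inner ℝ u e : ℝ) = 0) (hve : (inner ℝ v e : ℝ) = 0)
    (huv : (inner ℝ u v : ℝ) = 0) :
    ‖mul u v‖ = 1 ∧ (inner ℝ (mul u v) e : ℝ) = 0 ∧
      (inner ℝ (mul u v) u : ℝ) = 0 ∧ (inner ℝ (mul u v) v : ℝ) = 0 := by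
  refine ⟨by rw [hmon, hu, hv, one_mul], ?_, ?_, ?_⟩
  · have hswap := inner_mul_mul_add_inner_mul_mul_swap mul hmon u e v e
    rw [hul, hul, hur, hue, real_inner_comm u v, huv] at hswap
    linarith
  · calc ⟪mul u v, u⟫ = ⟪mul u v, mul u e⟫ := by rw [hur]
      _ = 0 := by rw [inner_mul_mul_same_left mul hmon, hve, mul_zero]
  · calc ⟪mul u v, v⟫ = ⟪mul u v, mul e v⟫ := by rw [hul]
      _ = 0 := by rw [inner_mul_mul_same_right mul hmon, hue, mul_zero]

theorem stmt_4 {A : Type*} [NormedAddCommGroup A] [InnerProductSpace ℝ A]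
    (mul : A →ₗ[ℝ] A →ₗ[ℝ] A) (e : A) (he : ‖e‖ = 1)
    (hul : ∀ x, mul e x = x) (hur : ∀ x, mul x e = x)
    (hmon : ∀ x y, ‖mul x y‖ = ‖x‖ * ‖y‖)
    (u v : A) (hu : ‖u‖ = 1) (hv : ‖v‖ = 1)
    (hue : (inner ℝ u e : ℝ) = 0) (hve : (inner ℝ v e : ℝ) = 0)
    (huv : (inner ℝ u v : ℝ) = 0) :
    ‖mul u v‖ = 1 ∧ (inner ℝ (mul u v) e : ℝ) = 0 ∧
      (inner ℝ (mul u v) u : ℝ) = 0 ∧ (inner ℝ (mul u v) v : ℝ) = 0 :=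
  stmt_4_general mul e hul hur hmon u v hu hv hue hve huv
end

section
/- In a Euclidean Hurwitz algebra, if x and y are orthonormal vectors each orthogonal to the unit element 1, then (x · y) · x = y and x · (y · x) = y. -/
/-!
Polarizing `‖a * b‖ = ‖a‖ * ‖b‖` in both arguments gives
`⟪a c, b d⟫ + ⟪a d, b c⟫ = 2 ⟪a, b⟫ ⟪c, d⟫`. Taking `b = 1` shows that left multiplication by a
vector `x ⟂ 1` is skew-adjoint, whence `x x = -‖x‖² 1`, and then
`x (y x) = ‖x‖² y - 2 ⟪x, y⟫ x` for `x, y ⟂ 1`. Passing to the opposite multiplication gives the same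
formula for `(x y) x`.
-/

open RealInnerProductSpace

namespace HurwitzAlgebra

variable {A : Type*} [NormedAddCommGroup A] [InnerProductSpace ℝ A] (mul : A →ₗ[ℝ] A →ₗ[ℝ] A)

theorem inner_mul_mul_same_left (hmon : ∀ x y, ‖mul x y‖ = ‖x‖ * ‖y‖) (a b c : A) :
    ⟪mul a b, mul a c⟫ = ‖a‖ ^ 2 * ⟪b, c⟫ := by
  have hsum : ‖mul a (b + c)‖ ^ 2 = (‖a‖ * ‖b + c‖) ^ 2 := by rw [hmon]
  rw [map_add, norm_add_sq_real, mul_pow, norm_add_sq_real, hmon, hmon] at hsum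
  linear_combination hsum / 2

theorem inner_mul_add_inner_mul (hmon : ∀ x y, ‖mul x y‖ = ‖x‖ * ‖y‖) (a b c d : A) :
    ⟪mul a c, mul b d⟫ + ⟪mul a d, mul b c⟫ = 2 * ⟪a, b⟫ * ⟪c, d⟫ := by
  have hsum := inner_mul_mul_same_left mul hmon (a + b) c d
  simp only [map_add, LinearMap.add_apply, inner_add_left, inner_add_right,
    inner_mul_mul_same_left mul hmon, norm_add_sq_real] at hsum
  linear_combination hsum - real_inner_comm (mul a d) (mul b c)

theorem inner_mul_left_eq_neg (hmon : ∀ x y, ‖mul x y‖ = ‖x‖ * ‖y‖) {e : A}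
    (hul : ∀ x, mul e x = x) {x : A} (hxe : ⟪x, e⟫ = 0) (b c : A) :
    ⟪mul x b, c⟫ = -⟪b, mul x c⟫ := by
  have h := inner_mul_add_inner_mul mul hmon x e b c
  rw [hul, hul, hxe, real_inner_comm b] at h
  linear_combination h

theorem mul_self_of_inner_eq_zero (hmon : ∀ x y, ‖mul x y‖ = ‖x‖ * ‖y‖) {e : A}
    (hul : ∀ x, mul e x = x) (hur : ∀ x, mul x e = x) {x : A} (hxe : ⟪x, e⟫ = 0) :
    mul x x = -(‖x‖ ^ 2 • e) := by
  refine ext_inner_right ℝ fun c ↦ ?_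
  have h := inner_mul_mul_same_left mul hmon x c e
  rw [hur, real_inner_comm] at h
  rw [inner_mul_left_eq_neg mul hmon hul hxe, h, inner_neg_left, real_inner_smul_left,
    real_inner_comm c]

theorem mul_mul_mul_self_right (hmon : ∀ x y, ‖mul x y‖ = ‖x‖ * ‖y‖) {e : A}
    (hul : ∀ x, mul e x = x) (hur : ∀ x, mul x e = x) {x y : A} (hxe : ⟪x, e⟫ = 0)
    (hye : ⟪y, e⟫ = 0) :
    mul x (mul y x) = ‖x‖ ^ 2 • y - (2 * ⟪x, y⟫) • x := by
  refine ext_inner_right ℝ fun c ↦ ?_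
  have hpol := inner_mul_add_inner_mul mul hmon x y c x
  have hyc : ⟪e, mul y c⟫ = -⟪y, c⟫ := by
    have h := inner_mul_left_eq_neg mul hmon hul hye e c
    rw [hur] at h
    linear_combination h
  rw [mul_self_of_inner_eq_zero mul hmon hul hur hxe, inner_neg_left, real_inner_smul_left,
    hyc] at hpol
  rw [inner_mul_left_eq_neg mul hmon hul hxe, inner_sub_left, real_inner_smul_left,
    real_inner_smul_left, real_inner_comm c x]
  linear_combination -hpol + real_inner_comm (mul y x) (mul x c)

theorem mul_mul_mul_self_left (hmon : ∀ x y, ‖mul x y‖ = ‖x‖ * ‖y‖) {e : A}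
    (hul : ∀ x, mul e x = x) (hur : ∀ x, mul x e = x) {x y : A} (hxe : ⟪x, e⟫ = 0)
    (hye : ⟪y, e⟫ = 0) :
    mul (mul x y) x = ‖x‖ ^ 2 • y - (2 * ⟪x, y⟫) • x :=
  mul_mul_mul_self_right mul.flip (fun a b ↦ (hmon b a).trans (mul_comm _ _)) hur hul hxe hye

end HurwitzAlgebra

theorem stmt_6_general {A : Type*} [NormedAddCommGroup A] [InnerProductSpace ℝ A]
    (mul : A →ₗ[ℝ] A →ₗ[ℝ] A) (e : A)
    (hul : ∀ x, mul e x = x) (hur : ∀ x, mul x e = x)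
    (hmon : ∀ x y, ‖mul x y‖ = ‖x‖ * ‖y‖)
    (x y : A) (hx : ‖x‖ = 1)
    (hxe : (inner ℝ x e : ℝ) = 0) (hye : (inner ℝ y e : ℝ) = 0)
    (hxy : (inner ℝ x y : ℝ) = 0) :
    mul (mul x y) x = y ∧ mul x (mul y x) = y := by
  rw [HurwitzAlgebra.mul_mul_mul_self_left mul hmon hul hur hxe hye,
    HurwitzAlgebra.mul_mul_mul_self_right mul hmon hul hur hxe hye, hx, hxy]
  simp

theorem stmt_6 {A : Type*} [NormedAddCommGroup A] [InnerProductSpace ℝ A]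
    (mul : A →ₗ[ℝ] A →ₗ[ℝ] A) (e : A) (he : ‖e‖ = 1)
    (hul : ∀ x, mul e x = x) (hur : ∀ x, mul x e = x)
    (hmon : ∀ x y, ‖mul x y‖ = ‖x‖ * ‖y‖)
    (x y : A) (hx : ‖x‖ = 1) (hy : ‖y‖ = 1)
    (hxe : (inner ℝ x e : ℝ) = 0) (hye : (inner ℝ y e : ℝ) = 0)
    (hxy : (inner ℝ x y : ℝ) = 0) :
    mul (mul x y) x = y ∧ mul x (mul y x) = y :=
  stmt_6_general mul e hul hur hmon x y hx hxe hye hxy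
end

section
/- In a Euclidean Hurwitz algebra, if x and y are orthonormal vectors each orthogonal to the unit element 1, then x · (x · y) = -y. -/
/-!
Polarizing `‖a * b‖² = ‖a‖² ‖b‖²` first in `b` and then in `a` gives
`⟪a b, c d⟫ + ⟪c b, a d⟫ = 2 ⟪a, c⟫ ⟪b, d⟫`. Taking `c = 1` shows that left multiplication by an
`a ⟂ 1` is skew-adjoint, so `⟪a (a b), c⟫ = -⟪a b, a c⟫ = -‖a‖² ⟪b, c⟫` for every `c`.
-/

open scoped RealInnerProductSpace

section NormMultiplicative

variable {A : Type*} [NormedAddCommGroup A] [InnerProductSpace ℝ A] (mul : A →ₗ[ℝ] A →ₗ[ℝ] A)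

theorem inner_mul_left_mul_left (hmon : ∀ x y, ‖mul x y‖ = ‖x‖ * ‖y‖) (a b c : A) :
    ⟪mul a b, mul a c⟫ = ‖a‖ ^ 2 * ⟪b, c⟫ := by
  have h := congrArg (· ^ 2) (hmon a (b + c))
  simp only [map_add, norm_add_sq_real, mul_pow, hmon] at h
  linarith

theorem inner_mul_add_inner_mul (hmon : ∀ x y, ‖mul x y‖ = ‖x‖ * ‖y‖) (a b c d : A) :
    ⟪mul a b, mul c d⟫ + ⟪mul c b, mul a d⟫ = 2 * ⟪a, c⟫ * ⟪b, d⟫ := by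
  have h := inner_mul_left_mul_left mul hmon (a + c) b d
  simp only [map_add, LinearMap.add_apply, inner_add_left, inner_add_right, norm_add_sq_real,
    inner_mul_left_mul_left mul hmon] at h
  linarith

theorem inner_mul_left_eq_neg_inner_mul_left (hmon : ∀ x y, ‖mul x y‖ = ‖x‖ * ‖y‖) {e : A}
    (hul : ∀ x, mul e x = x) {a : A} (ha : ⟪a, e⟫ = 0) (b c : A) :
    ⟪mul a b, c⟫ = -⟪b, mul a c⟫ := by
  have h := inner_mul_add_inner_mul mul hmon a b e c
  rw [hul, hul, ha] at h
  linarith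

theorem mul_mul_self_left_of_inner_eq_zero (hmon : ∀ x y, ‖mul x y‖ = ‖x‖ * ‖y‖) {e : A}
    (hul : ∀ x, mul e x = x) {a : A} (ha : ⟪a, e⟫ = 0) (b : A) :
    mul a (mul a b) = -(‖a‖ ^ 2 • b) := by
  refine ext_inner_right ℝ fun c => ?_
  rw [inner_mul_left_eq_neg_inner_mul_left mul hmon hul ha, inner_mul_left_mul_left mul hmon,
    inner_neg_left, real_inner_smul_left]

end NormMultiplicative

theorem stmt_7_general {A : Type*} [NormedAddCommGroup A] [InnerProductSpace ℝ A]
    (mul : A →ₗ[ℝ] A →ₗ[ℝ] A) (e : A)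
    (hul : ∀ x, mul e x = x)
    (hmon : ∀ x y, ‖mul x y‖ = ‖x‖ * ‖y‖)
    (x y : A) (hx : ‖x‖ = 1)
    (hxe : (inner ℝ x e : ℝ) = 0) :
    mul x (mul x y) = -y := by
  rw [mul_mul_self_left_of_inner_eq_zero mul hmon hul hxe, hx, one_pow, one_smul]

theorem stmt_7 {A : Type*} [NormedAddCommGroup A] [InnerProductSpace ℝ A]
    (mul : A →ₗ[ℝ] A →ₗ[ℝ] A) (e : A) (he : ‖e‖ = 1)
    (hul : ∀ x, mul e x = x) (hur : ∀ x, mul x e = x)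
    (hmon : ∀ x y, ‖mul x y‖ = ‖x‖ * ‖y‖)
    (x y : A) (hx : ‖x‖ = 1) (hy : ‖y‖ = 1)
    (hxe : (inner ℝ x e : ℝ) = 0) (hye : (inner ℝ y e : ℝ) = 0)
    (hxy : (inner ℝ x y : ℝ) = 0) :
    mul x (mul x y) = -y :=
  stmt_7_general mul e hul hmon x y hx hxe
end

section
/- In a Euclidean Hurwitz algebra, if x, y, z are orthonormal vectors each orthogonal to the unit element 1, and additionally x · y is orthogonal to z, then (x · y) · (y · z) = x · z. -/
/-!
Polarizing `‖a b‖ = ‖a‖ ‖b‖` in both factors gives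
`⟪a b, c d⟫ + ⟪c b, a d⟫ = 2 ⟪a, c⟫ ⟪b, d⟫`, so the two cross terms cancel as soon as `a ⊥ c`
or `b ⊥ d`. For `a ⊥ 1` this makes left multiplication by `a` skew-adjoint and gives
`a a = -‖a‖² 1`. Pairing `(x y)(y z)` with an arbitrary `w`, a chain of such cancellations
moves the factors around until only `⟪y y, (x z) w⟫ = -‖y‖² ⟪1, (x z) w⟫ = ‖y‖² ⟪x z, w⟫` remains.
-/

open RealInnerProductSpace

namespace CompositionAlgebra

variable {A : Type*} [NormedAddCommGroup A] [InnerProductSpace ℝ A]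
  {mul : A →ₗ[ℝ] A →ₗ[ℝ] A} (hmon : ∀ x y, ‖mul x y‖ = ‖x‖ * ‖y‖)
include hmon

theorem inner_mul_mul_left (a b d : A) :
    ⟪mul a b, mul a d⟫ = ‖a‖ ^ 2 * ⟪b, d⟫ := by
  have hbd := real_inner_add_add_self b d
  have habd := real_inner_add_add_self (mul a b) (mul a d)
  rw [← map_add] at habd
  simp only [real_inner_self_eq_norm_sq, hmon] at hbd habd
  linear_combination (‖a‖ ^ 2 * hbd - habd) / 2

theorem inner_mul_mul_add_inner_mul_mul (a b c d : A) :
    ⟪mul a b, mul c d⟫ + ⟪mul c b, mul a d⟫ = 2 * ⟪a, c⟫ * ⟪b, d⟫ := by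
  have hac := inner_mul_mul_left hmon (a + c) b d
  simp only [map_add, LinearMap.add_apply, inner_add_left, inner_add_right] at hac
  have hnorm : ‖a + c‖ ^ 2 = ‖a‖ ^ 2 + 2 * ⟪a, c⟫ + ‖c‖ ^ 2 := norm_add_sq_real a c
  rw [hnorm] at hac
  linarith [inner_mul_mul_left hmon a b d, inner_mul_mul_left hmon c b d]

theorem inner_mul_mul_eq_neg_of_inner_left {a c : A} (hac : ⟪a, c⟫ = 0) (b d : A) :
    ⟪mul a b, mul c d⟫ = -⟪mul c b, mul a d⟫ := by
  have h := inner_mul_mul_add_inner_mul_mul hmon a b c d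
  rw [hac, mul_zero, zero_mul] at h
  linarith

theorem inner_mul_mul_eq_neg_of_inner_right {b d : A} (hbd : ⟪b, d⟫ = 0) (a c : A) :
    ⟪mul a b, mul c d⟫ = -⟪mul c b, mul a d⟫ := by
  have h := inner_mul_mul_add_inner_mul_mul hmon a b c d
  rw [hbd, mul_zero] at h
  linarith

variable {e : A} (hul : ∀ x, mul e x = x)
include hul

theorem inner_mul_eq_neg_inner_mul {a : A} (hae : ⟪a, e⟫ = 0) (b d : A) :
    ⟪mul a b, d⟫ = -⟪b, mul a d⟫ := by
  simpa only [hul] using inner_mul_mul_eq_neg_of_inner_left hmon hae b d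

theorem inner_mul_unit_eq_neg_inner (hur : ∀ x, mul x e = x) {a : A} (hae : ⟪a, e⟫ = 0)
    (b : A) : ⟪mul a b, e⟫ = -⟪a, b⟫ := by
  rw [inner_mul_eq_neg_inner_mul hmon hul hae, hur, real_inner_comm]

theorem mul_self_eq_neg_norm_sq_smul_unit (hur : ∀ x, mul x e = x) {a : A} (hae : ⟪a, e⟫ = 0) :
    mul a a = -(‖a‖ ^ 2 • e) := by
  refine ext_inner_right ℝ fun v => ?_
  rw [inner_mul_eq_neg_inner_mul hmon hul hae, inner_neg_left, real_inner_smul_left,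
    ← inner_mul_mul_left hmon, hur]

end CompositionAlgebra

open CompositionAlgebra in
theorem stmt_10_general {A : Type*} [NormedAddCommGroup A] [InnerProductSpace ℝ A]
    (mul : A →ₗ[ℝ] A →ₗ[ℝ] A) (e : A)
    (hul : ∀ x, mul e x = x) (hur : ∀ x, mul x e = x)
    (hmon : ∀ x y, ‖mul x y‖ = ‖x‖ * ‖y‖)
    (x y z : A) (hy : ‖y‖ = 1)
    (hxe : (inner ℝ x e : ℝ) = 0) (hye : (inner ℝ y e : ℝ) = 0) (hze : (inner ℝ z e : ℝ) = 0)
    (hxy : (inner ℝ x y : ℝ) = 0) (hxz : (inner ℝ x z : ℝ) = 0) (hyz : (inner ℝ y z : ℝ) = 0)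
    (hxyz : (inner ℝ (mul x y) z : ℝ) = 0) :
    mul (mul x y) (mul y z) = mul x z := by
  have hxye : ⟪mul x y, e⟫ = 0 := by
    rw [inner_mul_unit_eq_neg_inner hmon hul hur hxe, hxy, neg_zero]
  have hxze : ⟪mul x z, e⟫ = 0 := by
    rw [inner_mul_unit_eq_neg_inner hmon hul hur hxe, hxz, neg_zero]
  have hyxy : ⟪y, mul x y⟫ = 0 := by
    linarith [inner_mul_eq_neg_inner_mul hmon hul hxe y y, real_inner_comm y (mul x y)]
  have hxzy : ⟪mul x z, y⟫ = 0 := by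
    rw [inner_mul_eq_neg_inner_mul hmon hul hxe, ← real_inner_comm, hxyz, neg_zero]
  refine ext_inner_right ℝ fun w => ?_
  calc ⟪mul (mul x y) (mul y z), w⟫
      = -⟪mul y z, mul (mul x y) w⟫ := inner_mul_eq_neg_inner_mul hmon hul hxye _ _
    _ = ⟪mul (mul x y) z, mul y w⟫ := by
      rw [inner_mul_mul_eq_neg_of_inner_left hmon hyxy, neg_neg]
    _ = -⟪mul (mul y w) z, mul x y⟫ := by
      simpa only [hur] using inner_mul_mul_eq_neg_of_inner_right hmon hze (mul x y) (mul y w)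
    _ = ⟪mul x z, mul (mul y w) y⟫ := by
      rw [inner_mul_mul_eq_neg_of_inner_right hmon (real_inner_comm y z ▸ hyz), neg_neg]
    _ = -⟪mul (mul x z) y, mul y w⟫ := by
      rw [real_inner_comm]
      simpa only [hur] using inner_mul_mul_eq_neg_of_inner_right hmon hye (mul y w) (mul x z)
    _ = ⟪mul y y, mul (mul x z) w⟫ := by
      rw [inner_mul_mul_eq_neg_of_inner_left hmon hxzy, neg_neg]
    _ = ⟪mul x z, w⟫ := by
      rw [mul_self_eq_neg_norm_sq_smul_unit hmon hul hur hye, hy, one_pow, one_smul,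
        inner_neg_left, real_inner_comm, inner_mul_unit_eq_neg_inner hmon hul hur hxze, neg_neg]

theorem stmt_10 {A : Type*} [NormedAddCommGroup A] [InnerProductSpace ℝ A]
    (mul : A →ₗ[ℝ] A →ₗ[ℝ] A) (e : A) (he : ‖e‖ = 1)
    (hul : ∀ x, mul e x = x) (hur : ∀ x, mul x e = x)
    (hmon : ∀ x y, ‖mul x y‖ = ‖x‖ * ‖y‖)
    (x y z : A) (hx : ‖x‖ = 1) (hy : ‖y‖ = 1) (hz : ‖z‖ = 1)
    (hxe : (inner ℝ x e : ℝ) = 0) (hye : (inner ℝ y e : ℝ) = 0) (hze : (inner ℝ z e : ℝ) = 0)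
    (hxy : (inner ℝ x y : ℝ) = 0) (hxz : (inner ℝ x z : ℝ) = 0) (hyz : (inner ℝ y z : ℝ) = 0)
    (hxyz : (inner ℝ (mul x y) z : ℝ) = 0) :
    mul (mul x y) (mul y z) = mul x z :=
  stmt_10_general mul e hul hur hmon x y z hy hxe hye hze hxy hxz hyz hxyz
end

section
/- There is no Euclidean Hurwitz algebra of dimension greater than 8. Specifically, if a Euclidean Hurwitz algebra contains orthonormal vectors u, v, w, s such that the sixteen vectors obtained by products 1, u, v, uv, w, uw, vw, (uv)w, s, us, vs, (uv)s, ws, (uw)s, (vw)s, ((uv)w)s form an orthonormal set, then a contradiction follows: (uv + ws)·(sv + wu) = 0 while the norm of this product must equal 2. -/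
open scoped RealInnerProductSpace

section HurwitzAux
variable {A : Type*} [NormedAddCommGroup A] [InnerProductSpace ℝ A]

theorem hz_polar1 (mul : A →ₗ[ℝ] A →ₗ[ℝ] A)
    (hmon : ∀ x y : A, ‖mul x y‖ = ‖x‖ * ‖y‖) (x x' y : A) :
    ⟪mul x y, mul x' y⟫ = ⟪x, x'⟫ * ⟪y, y⟫ := by
  have key : ∀ a b : A, ⟪mul a b, mul a b⟫ = ⟪a,a⟫ * ⟪b,b⟫ := by
    intro a b
    rw [real_inner_self_eq_norm_sq, real_inner_self_eq_norm_sq, real_inner_self_eq_norm_sq, hmon]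
    ring
  have h1 := key (x + x') y
  have h2 := key x y
  have h3 := key x' y
  simp only [map_add, LinearMap.add_apply, inner_add_left, inner_add_right] at h1
  linear_combination (h1 - h2 - h3)/2 - (1/2) * real_inner_comm (mul x y) (mul x' y) -
    (⟪y,y⟫/2) * real_inner_comm x' x

theorem hz_exch (mul : A →ₗ[ℝ] A →ₗ[ℝ] A)
    (hmon : ∀ x y : A, ‖mul x y‖ = ‖x‖ * ‖y‖) (x x' y y' : A) :
    ⟪mul x y, mul x' y'⟫ + ⟪mul x y', mul x' y⟫ = 2 * ⟪x, x'⟫ * ⟪y, y'⟫ := by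
  have h1 := hz_polar1 mul hmon x x' (y + y')
  have h2 := hz_polar1 mul hmon x x' y
  have h3 := hz_polar1 mul hmon x x' y'
  simp only [map_add, inner_add_left, inner_add_right] at h1
  linear_combination h1 - h2 - h3 - ⟪x,x'⟫ * real_inner_comm y' y

theorem hz_polar2 (mul : A →ₗ[ℝ] A →ₗ[ℝ] A)
    (hmon : ∀ x y : A, ‖mul x y‖ = ‖x‖ * ‖y‖) (x y y' : A) :
    ⟪mul x y, mul x y'⟫ = ⟪x, x⟫ * ⟪y, y'⟫ := by
  have h := hz_exch mul hmon x x y y'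
  linear_combination h/2 - (1/2) * real_inner_comm (mul x y) (mul x y')

theorem hz_lflip (mul : A →ₗ[ℝ] A →ₗ[ℝ] A) {e : A} (hul : ∀ x, mul e x = x)
    (hmon : ∀ x y : A, ‖mul x y‖ = ‖x‖ * ‖y‖) {a : A} (ha : ⟪a, e⟫ = 0) (b z : A) :
    ⟪mul a b, z⟫ = -⟪b, mul a z⟫ := by
  have h := hz_exch mul hmon a e b z
  rw [hul, hul] at h
  linear_combination h + real_inner_comm (mul a z) b + 2*⟪b,z⟫*ha

theorem hz_rflip (mul : A →ₗ[ℝ] A →ₗ[ℝ] A) {e : A} (hur : ∀ x, mul x e = x)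
    (hmon : ∀ x y : A, ‖mul x y‖ = ‖x‖ * ‖y‖) {b : A} (hb : ⟪b, e⟫ = 0) (a z : A) :
    ⟪mul a b, z⟫ = -⟪a, mul z b⟫ := by
  have h := hz_exch mul hmon a z b e
  rw [hur, hur] at h
  linear_combination h + 2*⟪a,z⟫*hb

theorem hz_rcancel (mul : A →ₗ[ℝ] A →ₗ[ℝ] A) {e : A} (hur : ∀ x, mul x e = x)
    (hmon : ∀ x y : A, ‖mul x y‖ = ‖x‖ * ‖y‖) {b : A} (hb : ⟪b, e⟫ = 0)
    (hb1 : ⟪b, b⟫ = 1) (a : A) : mul (mul a b) b = -a := by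
  apply ext_inner_right ℝ
  intro z
  have h1 := hz_rflip mul hur hmon hb (mul a b) z
  have h2 := hz_polar1 mul hmon a z b
  rw [inner_neg_left, h1, h2, hb1]
  ring

theorem hz_lcancel (mul : A →ₗ[ℝ] A →ₗ[ℝ] A) {e : A} (hul : ∀ x, mul e x = x)
    (hmon : ∀ x y : A, ‖mul x y‖ = ‖x‖ * ‖y‖) {a : A} (ha : ⟪a, e⟫ = 0)
    (ha1 : ⟪a, a⟫ = 1) (b : A) : mul a (mul a b) = -b := by
  apply ext_inner_right ℝ
  intro z
  have h1 := hz_lflip mul hul hmon ha (mul a b) z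
  have h2 := hz_polar2 mul hmon a b z
  rw [inner_neg_left, h1, h2, ha1]
  ring

theorem hz_sqpt (mul : A →ₗ[ℝ] A →ₗ[ℝ] A) {e : A} (hul : ∀ x, mul e x = x)
    (hur : ∀ x, mul x e = x)
    (hmon : ∀ x y : A, ‖mul x y‖ = ‖x‖ * ‖y‖) {a : A} (ha : ⟪a, e⟫ = 0) (z : A) :
    ⟪mul a a, z⟫ = -(⟪a,a⟫ * ⟪e,z⟫) := by
  have h1 := hz_lflip mul hul hmon ha a z
  have h3 : ⟪a, mul a z⟫ = ⟪a,a⟫ * ⟪e,z⟫ := by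
    have h := hz_polar2 mul hmon a e z
    rwa [hur] at h
  rw [h1, h3]

theorem hz_anticom (mul : A →ₗ[ℝ] A →ₗ[ℝ] A) {e : A} (hul : ∀ x, mul e x = x)
    (hur : ∀ x, mul x e = x)
    (hmon : ∀ x y : A, ‖mul x y‖ = ‖x‖ * ‖y‖) {a b : A} (ha : ⟪a, e⟫ = 0)
    (hb : ⟪b, e⟫ = 0) (hab : ⟪a, b⟫ = 0) : mul b a = -mul a b := by
  apply ext_inner_right ℝ
  intro z
  have hab' : ⟪a + b, e⟫ = 0 := by rw [inner_add_left, ha, hb]; ring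
  have h1 := hz_sqpt mul hul hur hmon hab' z
  have h2 := hz_sqpt mul hul hur hmon ha z
  have h3 := hz_sqpt mul hul hur hmon hb z
  have e1 : mul (a+b) (a+b) = mul a a + mul a b + mul b a + mul b b := by
    simp only [map_add, LinearMap.add_apply]; abel
  rw [e1, real_inner_add_add_self] at h1
  simp only [inner_add_left] at h1
  rw [inner_neg_left]
  linear_combination h1 - h2 - h3 - 2*⟪e,z⟫*hab

end HurwitzAux

theorem stmt_12 {A : Type*} [NormedAddCommGroup A] [InnerProductSpace ℝ A]
    (mul : A →ₗ[ℝ] A →ₗ[ℝ] A) (e : A) (he : ‖e‖ = 1)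
    (hul : ∀ x, mul e x = x) (hur : ∀ x, mul x e = x)
    (hmon : ∀ x y, ‖mul x y‖ = ‖x‖ * ‖y‖)
    (u v w s : A)
    (h16 : Orthonormal ℝ
      ![e, u, v, mul u v, w, mul u w, mul v w, mul (mul u v) w,
        s, mul u s, mul v s, mul (mul u v) s, mul w s, mul (mul u w) s,
        mul (mul v w) s, mul (mul (mul u v) w) s]) : False := by
  have unit_of : ∀ {x : A}, ‖x‖ = 1 → ⟪x,x⟫ = 1 := fun h => by
    rw [real_inner_self_eq_norm_sq, h]; norm_num
  -- purity facts
  have p_u : ⟪u, e⟫ = 0 := by simpa using h16.2 (i := 1) (j := 0) (by decide)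
  have p_v : ⟪v, e⟫ = 0 := by simpa using h16.2 (i := 2) (j := 0) (by decide)
  have p_w : ⟪w, e⟫ = 0 := by simpa using h16.2 (i := 4) (j := 0) (by decide)
  have p_s : ⟪s, e⟫ = 0 := by simpa using h16.2 (i := 8) (j := 0) (by decide)
  have p_uv : ⟪mul u v, e⟫ = 0 := by simpa using h16.2 (i := 3) (j := 0) (by decide)
  have p_uw : ⟪mul u w, e⟫ = 0 := by simpa using h16.2 (i := 5) (j := 0) (by decide)
  have p_vs : ⟪mul v s, e⟫ = 0 := by simpa using h16.2 (i := 10) (j := 0) (by decide)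
  have p_ws : ⟪mul w s, e⟫ = 0 := by simpa using h16.2 (i := 12) (j := 0) (by decide)
  -- unit facts
  have i_u : ⟪u, u⟫ = 1 := unit_of (by simpa using h16.1 1)
  have i_v : ⟪v, v⟫ = 1 := unit_of (by simpa using h16.1 2)
  have i_w : ⟪w, w⟫ = 1 := unit_of (by simpa using h16.1 4)
  have i_s : ⟪s, s⟫ = 1 := unit_of (by simpa using h16.1 8)
  have i_uv : ⟪mul u v, mul u v⟫ = 1 := unit_of (by simpa using h16.1 3)
  have i_uw : ⟪mul u w, mul u w⟫ = 1 := unit_of (by simpa using h16.1 5)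
  have i_vs : ⟪mul v s, mul v s⟫ = 1 := unit_of (by simpa using h16.1 10)
  have i_ws : ⟪mul w s, mul w s⟫ = 1 := unit_of (by simpa using h16.1 12)
  -- orthogonality facts
  have huv : ⟪u, v⟫ = 0 := by simpa using h16.2 (i := 1) (j := 2) (by decide)
  have huw : ⟪u, w⟫ = 0 := by simpa using h16.2 (i := 1) (j := 4) (by decide)
  have hus : ⟪u, s⟫ = 0 := by simpa using h16.2 (i := 1) (j := 8) (by decide)
  have hvw : ⟪v, w⟫ = 0 := by simpa using h16.2 (i := 2) (j := 4) (by decide)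
  have hvs : ⟪v, s⟫ = 0 := by simpa using h16.2 (i := 2) (j := 8) (by decide)
  have hs_uv : ⟪s, mul u v⟫ = 0 := by simpa using h16.2 (i := 8) (j := 3) (by decide)
  have hw_uv : ⟪w, mul u v⟫ = 0 := by simpa using h16.2 (i := 4) (j := 3) (by decide)
  have hv_ws : ⟪v, mul w s⟫ = 0 := by simpa using h16.2 (i := 2) (j := 12) (by decide)
  have hs_uw : ⟪s, mul u w⟫ = 0 := by simpa using h16.2 (i := 8) (j := 5) (by decide)
  have huv_ws : ⟪mul u v, mul w s⟫ = 0 := by simpa using h16.2 (i := 3) (j := 12) (by decide)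
  have hvs_uw : ⟪mul v s, mul u w⟫ = 0 := by simpa using h16.2 (i := 10) (j := 5) (by decide)
  -- anticommutation
  have hvu : mul v u = -mul u v := hz_anticom mul hul hur hmon p_u p_v huv
  have hwu : mul w u = -mul u w := hz_anticom mul hul hur hmon p_u p_w huw
  have hsu : mul s u = -mul u s := hz_anticom mul hul hur hmon p_u p_s hus
  have hwv : mul w v = -mul v w := hz_anticom mul hul hur hmon p_v p_w hvw
  have hsv : mul s v = -mul v s := hz_anticom mul hul hur hmon p_v p_s hvs
  -- E1 : (uv)(sv) = -(us)
  have E1 : mul (mul u v) (mul s v) = -(mul u s) := by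
    apply ext_inner_right ℝ
    intro z
    rw [inner_neg_left]
    have h1 := hz_lflip mul hul hmon p_uv (mul s v) z
    have h2 := hz_exch mul hmon s (mul u v) v z
    have hc : mul (mul u v) v = -u := hz_rcancel mul hur hmon p_v i_v u
    rw [hc, inner_neg_right, hs_uv] at h2
    simp only [mul_zero, zero_mul] at h2
    have h4 := hz_lflip mul hul hmon p_s z u
    rw [hsu, inner_neg_right] at h4
    have hcomm := real_inner_comm z (mul u s)
    linarith
  -- E2 : (uv)(wu) = vw
  have E2 : mul (mul u v) (mul w u) = mul v w := by
    apply ext_inner_right ℝ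
    intro z
    have h1 := hz_lflip mul hul hmon p_uv (mul w u) z
    have h2 := hz_exch mul hmon w (mul u v) u z
    have hc : mul (mul u v) u = v := by
      have hr := hz_rcancel mul hur hmon p_u i_u v
      rw [hvu] at hr
      simp only [map_neg, LinearMap.neg_apply] at hr
      exact neg_inj.mp hr
    rw [hc, hw_uv] at h2
    simp only [mul_zero, zero_mul] at h2
    have h4 := hz_lflip mul hul hmon p_w z v
    rw [hwv, inner_neg_right] at h4
    have hcomm := real_inner_comm z (mul v w)
    linarith
  -- E3 : (ws)(sv) = -(vw)
  have E3 : mul (mul w s) (mul s v) = -(mul v w) := by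
    rw [hsv, map_neg, neg_inj]
    apply ext_inner_right ℝ
    intro z
    have h1 := hz_lflip mul hul hmon p_ws (mul v s) z
    have h2 := hz_exch mul hmon v (mul w s) s z
    have hc : mul (mul w s) s = -w := hz_rcancel mul hur hmon p_s i_s w
    rw [hc, inner_neg_right, hv_ws] at h2
    simp only [mul_zero, zero_mul] at h2
    have h4 := hz_lflip mul hul hmon p_v z w
    have hcomm := real_inner_comm z (mul v w)
    linarith
  -- E4 : (ws)(wu) = us
  have E4 : mul (mul w s) (mul w u) = mul u s := by
    have p_wu : ⟪mul w u, e⟫ = 0 := by rw [hwu, inner_neg_left, p_uw]; ring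
    have hs_wu : ⟪s, mul w u⟫ = 0 := by rw [hwu, inner_neg_right, hs_uw]; ring
    apply ext_inner_right ℝ
    intro z
    have h1 := hz_rflip mul hur hmon p_wu (mul w s) z
    have h2 := hz_exch mul hmon w z s (mul w u)
    have hc : mul w (mul w u) = -u := hz_lcancel mul hul hmon p_w i_w u
    rw [hc, inner_neg_left, hs_wu] at h2
    simp only [mul_zero, zero_mul] at h2
    have h4 := hz_rflip mul hur hmon p_s u z
    linarith
  -- the product is zero
  have hsum : mul (mul u v + mul w s) (mul s v + mul w u) = 0 := by
    simp only [map_add, LinearMap.add_apply]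
    rw [E1, E2, E3, E4]
    abel
  have hnz := hmon (mul u v + mul w s) (mul s v + mul w u)
  rw [hsum, norm_zero] at hnz
  have ha2 : ⟪mul u v + mul w s, mul u v + mul w s⟫ = (2:ℝ) := by
    rw [real_inner_add_add_self, i_uv, i_ws, huv_ws]; norm_num
  have hb2 : ⟪mul s v + mul w u, mul s v + mul w u⟫ = (2:ℝ) := by
    rw [hsv, hwu, ← neg_add, inner_neg_neg, real_inner_add_add_self, i_vs, i_uw, hvs_uw]
    norm_num
  have hane : mul u v + mul w s ≠ 0 := by
    intro h; rw [h, inner_zero_left] at ha2; norm_num at ha2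
  have hbne : mul s v + mul w u ≠ 0 := by
    intro h; rw [h, inner_zero_left] at hb2; norm_num at hb2
  exact (mul_ne_zero (norm_ne_zero_iff.mpr hane) (norm_ne_zero_iff.mpr hbne)) hnz.symm
end

section
/- In a Euclidean Hurwitz algebra of dimension 2, if i denotes a unit vector orthogonal to the unit element 1, then for all real α, β, γ, δ: (α·1 + β·i)·(γ·1 + δ·i) = (αγ - βδ)·1 + (αδ + βγ)·i. In particular, the multiplication coincides with complex multiplication and is commutative. -/
/-!
Polarizing `‖x y‖ = ‖x‖ ‖y‖` in both factors gives the exchange identity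
`⟪x y, z w⟫ + ⟪x w, z y⟫ = 2 ⟪x, z⟫ ⟪y, w⟫`. Taking `x = y = i` and `z = w = e` yields
`⟪i i, e⟫ = -1`, so `i i = -e` by the equality case of Cauchy–Schwarz, both being unit vectors.
Bilinearity then gives complex multiplication on the span of `e` and `i`, which is everything
in dimension 2; commutativity follows.
-/

open scoped RealInnerProductSpace

theorem exists_smul_add_smul_eq_of_finrank_eq_two {K V : Type*} [DivisionRing K] [AddCommGroup V]
    [Module K V] (hdim : Module.finrank K V = 2) {u v : V} (huv : LinearIndependent K ![u, v])
    (x : V) : ∃ a b : K, a • u + b • v = x := by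
  have hspan := huv.span_eq_top_of_card_eq_finrank (by simp [hdim])
  rw [Matrix.range_cons, Matrix.range_cons, Matrix.range_empty, Set.union_empty,
    Set.union_singleton, Set.pair_comm] at hspan
  exact Submodule.mem_span_pair.mp (hspan ▸ Submodule.mem_top)

section NormMultiplicative

variable {A : Type*} [NormedAddCommGroup A] [InnerProductSpace ℝ A]
  {mul : A →ₗ[ℝ] A →ₗ[ℝ] A} (hmon : ∀ x y, ‖mul x y‖ = ‖x‖ * ‖y‖)
include hmon

theorem real_inner_mul_mul_same_right (x z y : A) :
    ⟪mul x y, mul z y⟫ = ⟪x, z⟫ * ⟪y, y⟫ := by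
  rw [real_inner_eq_norm_add_mul_self_sub_norm_mul_self_sub_norm_mul_self_div_two (mul x y),
    ← LinearMap.add_apply, ← map_add, hmon, hmon, hmon,
    real_inner_eq_norm_add_mul_self_sub_norm_mul_self_sub_norm_mul_self_div_two x z,
    real_inner_self_eq_norm_mul_norm]
  ring

theorem real_inner_mul_mul_add_mul_mul_swap (x z y w : A) :
    ⟪mul x y, mul z w⟫ + ⟪mul x w, mul z y⟫ = 2 * ⟪x, z⟫ * ⟪y, w⟫ := by
  have h := real_inner_mul_mul_same_right hmon x z (y + w)
  simp only [map_add, inner_add_left, inner_add_right, real_inner_mul_mul_same_right hmon] at h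
  rw [real_inner_comm y w] at h
  linear_combination h

variable {e : A} (he : ‖e‖ = 1) (hul : ∀ x, mul e x = x) (hur : ∀ x, mul x e = x)
include he hul hur

theorem mul_self_eq_neg_of_inner_eq_zero {i : A} (hi : ‖i‖ = 1) (hie : ⟪i, e⟫ = 0) :
    mul i i = -e := by
  have hexchange := real_inner_mul_mul_add_mul_mul_swap hmon i e i e
  rw [hul, hur, hul, hie, real_inner_self_eq_norm_sq, hi] at hexchange
  refine (inner_eq_neg_one_iff_of_norm_eq_one (𝕜 := ℝ) (by rw [hmon, hi, one_mul]) he).mp ?_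
  linarith

theorem mul_smul_add_smul_of_inner_eq_zero {i : A} (hi : ‖i‖ = 1) (hie : ⟪i, e⟫ = 0)
    (α β γ δ : ℝ) :
    mul (α • e + β • i) (γ • e + δ • i) = (α * γ - β * δ) • e + (α * δ + β * γ) • i := by
  simp only [map_add, map_smul, LinearMap.add_apply, LinearMap.smul_apply, hul, hur,
    mul_self_eq_neg_of_inner_eq_zero hmon he hul hur hi hie]
  module

end NormMultiplicative

theorem stmt_14 {A : Type*} [NormedAddCommGroup A] [InnerProductSpace ℝ A]
    (mul : A →ₗ[ℝ] A →ₗ[ℝ] A) (e : A) (he : ‖e‖ = 1)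
    (hul : ∀ x, mul e x = x) (hur : ∀ x, mul x e = x)
    (hmon : ∀ x y, ‖mul x y‖ = ‖x‖ * ‖y‖)
    (hdim : Module.finrank ℝ A = 2)
    (i : A) (hi : ‖i‖ = 1) (hie : (inner ℝ i e : ℝ) = 0) :
    (∀ α β γ δ : ℝ,
      mul (α • e + β • i) (γ • e + δ • i)
        = (α * γ - β * δ) • e + (α * δ + β * γ) • i) ∧
    (∀ x y : A, mul x y = mul y x) := by
  have hmul := mul_smul_add_smul_of_inner_eq_zero hmon he hul hur hi hie
  refine ⟨hmul, fun x y => ?_⟩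
  have hindep : LinearIndependent ℝ ![e, i] :=
    Orthonormal.linearIndependent (by simp [he, hi, real_inner_comm e i ▸ hie])
  obtain ⟨α, β, rfl⟩ := exists_smul_add_smul_eq_of_finrank_eq_two hdim hindep x
  obtain ⟨γ, δ, rfl⟩ := exists_smul_add_smul_eq_of_finrank_eq_two hdim hindep y
  rw [hmul, hmul]
  congr 2 <;> ring
end
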